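/- (Theorem 1, 'All ε-BNE are good'.) Fix a voting environment (priors P_H, P_L; signal probabilities P_hH, P_hL; fractions α_F, α_U, α_C) as below, with 0-1 utilities. Let {Σ_n} be a sequence of two-round voting strategy profiles (one profile for each number n of agents) and let {ε_n} be a sequence of nonnegative reals with lim_{n→∞} ε_n = 0 such that for every n, Σ_n is an ε_n-strong Bayes Nash equilibrium of the n-agent two-round voting game. Then the fidelity satisfies lim_{n→∞} A(Σ_n) = 1. -/

import Mathlib

noncomputable section
open Classical Finset Filter
open scoped Classical

namespace TwoRoundVoting

/-- Number of friendly agents among `n` agents. -/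
def numF (alphaF : ℝ) (n : ℕ) : ℕ := ⌊alphaF * n⌋₊

/-- Number of unfriendly agents among `n` agents. -/
def numU (alphaU : ℝ) (n : ℕ) : ℕ := ⌊alphaU * n⌋₊

/-- Number of contingent agents among `n` agents. -/
def numC (alphaF alphaU : ℝ) (n : ℕ) : ℕ := n - numF alphaF n - numU alphaU n

/-- A (behavioral) strategy profile in the two-round voting game with `n` agents.
`s1 i m` is the probability that agent `i` votes `A` in the first round upon signal `m`
(`true` = signal `h`, `false` = signal `l`); `s2 i m x` is the probability that agent `i`
votes `A` in the second round upon signal `m` when the announced number of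
first-round `A`-votes is `x`. -/
structure TwoRound (n : ℕ) where
  s1 : Fin n → Bool → ℝ
  s2 : Fin n → Bool → ℕ → ℝ
  s1_nonneg : ∀ i m, 0 ≤ s1 i m
  s1_le_one : ∀ i m, s1 i m ≤ 1
  s2_nonneg : ∀ i m x, 0 ≤ s2 i m x
  s2_le_one : ∀ i m x, s2 i m x ≤ 1

/-- Probability of signal `h` in world state `k` (`true` = `H`, `false` = `L`). -/
def sigP (phH phL : ℝ) (k : Bool) : ℝ := if k then phH else phL

/-- Probability of the signal vector `s` conditioned on world state `k`
(signals are i.i.d. conditioned on the state). -/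
def sigWeight (phH phL : ℝ) (k : Bool) {n : ℕ} (s : Fin n → Bool) : ℝ :=
  ∏ i, if s i then sigP phH phL k else 1 - sigP phH phL k

/-- Number of `A`-votes in a vote vector. -/
def countA {n : ℕ} (v : Fin n → Bool) : ℕ :=
  (Finset.univ.filter fun i => v i = true).card

/-- Probability that alternative `A` wins (i.e. gets strictly more than `n/2`
second-round votes) conditioned on the world state `k`, under profile `σ`. -/
def prAwins (phH phL : ℝ) {n : ℕ} (σ : TwoRound n) (k : Bool) : ℝ :=
  ∑ s : Fin n → Bool, ∑ v1 : Fin n → Bool, ∑ v2 : Fin n → Bool,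
    sigWeight phH phL k s *
      (∏ i, if v1 i then σ.s1 i (s i) else 1 - σ.s1 i (s i)) *
      (∏ i, if v2 i then σ.s2 i (s i) (countA v1) else 1 - σ.s2 i (s i) (countA v1)) *
      (if 2 * countA v2 > n then 1 else 0)

/-- Fidelity of a profile: probability that the informed majority decision is reached. -/
def fidelity (PH PL phH phL : ℝ) {n : ℕ} (σ : TwoRound n) : ℝ :=
  PL * (1 - prAwins phH phL σ false) + PH * prAwins phH phL σ true

/-- Expected 0-1 utility of agent `i`: the first `numF` agents are friendly,
the next `numU` are unfriendly, and the remaining agents are contingent. -/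
def util (PH PL phH phL alphaF alphaU : ℝ) {n : ℕ} (σ : TwoRound n) (i : Fin n) : ℝ :=
  if (i : ℕ) < numF alphaF n then
    PH * prAwins phH phL σ true + PL * prAwins phH phL σ false
  else if (i : ℕ) < numF alphaF n + numU alphaU n then
    PH * (1 - prAwins phH phL σ true) + PL * (1 - prAwins phH phL σ false)
  else
    fidelity PH PL phH phL σ

/-- `σ` is an `ε`-strong Bayes Nash equilibrium: no coalition `D` can deviate so that
every member weakly gains and some member gains more than `ε`. -/
def IsEpsStrongBNE (PH PL phH phL alphaF alphaU : ℝ) {n : ℕ} (σ : TwoRound n) (ε : ℝ) :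
    Prop :=
  ¬ ∃ (D : Finset (Fin n)) (σ' : TwoRound n),
      (∀ i, i ∉ D → σ'.s1 i = σ.s1 i ∧ σ'.s2 i = σ.s2 i) ∧
      (∀ i ∈ D, util PH PL phH phL alphaF alphaU σ i ≤
        util PH PL phH phL alphaF alphaU σ' i) ∧
      (∃ i ∈ D, util PH PL phH phL alphaF alphaU σ i + ε <
        util PH PL phH phL alphaF alphaU σ' i)



/-! ### Infrastructure: product Bernoulli measures on Boolean vectors -/

section Infra
variable {n : ℕ}

/-- Weight of a vote vector under independent Bernoulli coordinates. -/
def W (p : Fin n → ℝ) (v : Fin n → Bool) : ℝ := ∏ i, if v i then p i else 1 - p i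

lemma sum_pi_bool (f : Fin n → Bool → ℝ) :
    ∑ v : Fin n → Bool, ∏ i, f i (v i) = ∏ i, (f i true + f i false) := by
  classical
  have h : ∏ i, (f i true + f i false) = ∏ i, ∑ b : Bool, f i b := by
    simp [Fintype.sum_bool]
  rw [h, Finset.prod_univ_sum, Fintype.piFinset_univ]

lemma sum_W (p : Fin n → ℝ) : ∑ v : Fin n → Bool, W p v = 1 := by
  have := sum_pi_bool (fun i b => if b then p i else 1 - p i)
  simp only [W, this]
  simp

lemma W_nonneg {p : Fin n → ℝ} (hp : ∀ i, 0 ≤ p i ∧ p i ≤ 1) (v : Fin n → Bool) :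
    0 ≤ W p v := by
  apply Finset.prod_nonneg
  intro i _
  rcases hp i with ⟨h0, h1⟩
  cases hv : v i <;> simp [hv] <;> linarith

lemma countA_cast (v : Fin n → Bool) :
    ((countA v : ℕ) : ℝ) = ∑ i, (if v i then (1:ℝ) else 0) := by
  classical
  unfold countA
  rw [Finset.card_filter]
  push_cast
  simp

/-- Mean of `countA`. -/
def meanW (p : Fin n → ℝ) : ℝ := ∑ i, p i

lemma sum_W_mul_prod (p : Fin n → ℝ) (g : Fin n → Bool → ℝ) :
    ∑ v : Fin n → Bool, W p v * ∏ i, g i (v i)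
      = ∏ i, (p i * g i true + (1 - p i) * g i false) := by
  classical
  have h : ∀ v : Fin n → Bool, W p v * ∏ i, g i (v i)
      = ∏ i, ((if v i then p i else 1 - p i) * g i (v i)) := by
    intro v
    rw [W, ← Finset.prod_mul_distrib]
  simp only [h]
  have := sum_pi_bool (fun i b => (if b then p i else 1 - p i) * g i b)
  rw [this]
  simp

/-- Variance identity for `countA` under the product measure. -/
lemma var_W (p : Fin n → ℝ) :
    ∑ v : Fin n → Bool, W p v * ((countA v : ℝ) - meanW p)^2
      = ∑ i, p i * (1 - p i) := by
  classical
  have hcent : ∀ v : Fin n → Bool,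
      ((countA v : ℝ) - meanW p) = ∑ i, ((if v i then (1:ℝ) else 0) - p i) := by
    intro v
    rw [countA_cast, meanW, ← Finset.sum_sub_distrib]
  have hsq : ∀ v : Fin n → Bool, ((countA v : ℝ) - meanW p)^2
      = ∑ i, ∑ j, ((if v i then (1:ℝ) else 0) - p i) * ((if v j then (1:ℝ) else 0) - p j) := by
    intro v
    rw [hcent, sq, Finset.sum_mul_sum]
  simp only [hsq, Finset.mul_sum]
  rw [Finset.sum_comm]
  have hswap : ∑ i : Fin n, ∑ v : Fin n → Bool, ∑ j : Fin n,
      W p v * (((if v i then (1:ℝ) else 0) - p i) * ((if v j then (1:ℝ) else 0) - p j))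
      = ∑ i : Fin n, ∑ j : Fin n, ∑ v : Fin n → Bool,
      W p v * (((if v i then (1:ℝ) else 0) - p i) * ((if v j then (1:ℝ) else 0) - p j)) := by
    refine Finset.sum_congr rfl fun i _ => ?_
    rw [Finset.sum_comm]
  rw [hswap]
  have hinner : ∀ i j : Fin n, ∑ v : Fin n → Bool,
      W p v * (((if v i then (1:ℝ) else 0) - p i) * ((if v j then (1:ℝ) else 0) - p j))
      = if i = j then p i * (1 - p i) else 0 := by
    intro i j
    have hprod : ∀ v : Fin n → Bool,
        (((if v i then (1:ℝ) else 0) - p i) * ((if v j then (1:ℝ) else 0) - p j))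
        = ∏ k, ((if k = i then (if v k then (1:ℝ) else 0) - p k else 1) *
                (if k = j then (if v k then (1:ℝ) else 0) - p k else 1)) := by
      intro v
      rw [Finset.prod_mul_distrib]
      rw [Finset.prod_ite_eq' Finset.univ i (fun k => (if v k then (1:ℝ) else 0) - p k)]
      rw [Finset.prod_ite_eq' Finset.univ j (fun k => (if v k then (1:ℝ) else 0) - p k)]
      simp
    simp only [hprod]
    rw [sum_W_mul_prod p (fun k b => (if k = i then (if b then (1:ℝ) else 0) - p k else 1) *
                (if k = j then (if b then (1:ℝ) else 0) - p k else 1))]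
    by_cases hij : i = j
    · subst hij
      rw [if_pos rfl]
      rw [Finset.prod_eq_single i]
      · simp only [if_pos rfl]
        norm_num
        ring
      · intro k _ hk
        simp [hk]
      · simp
    · rw [if_neg hij]
      apply Finset.prod_eq_zero (Finset.mem_univ i)
      simp only [if_pos rfl, if_neg hij]
      norm_num
      ring
  simp only [hinner]
  simp

end Infra

section PrB
variable {n : ℕ}

/-- Probability that the number of `A`-votes satisfies `Q`, under independent
Bernoulli voting with success probabilities `p`. -/
def PrB (p : Fin n → ℝ) (Q : ℕ → Prop) : ℝ :=
  ∑ v : Fin n → Bool, W p v * (if Q (countA v) then 1 else 0)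

lemma PrB_nonneg {p : Fin n → ℝ} (hp : ∀ i, 0 ≤ p i ∧ p i ≤ 1) (Q : ℕ → Prop) :
    0 ≤ PrB p Q := by
  apply Finset.sum_nonneg
  intro v _
  have := W_nonneg hp v
  positivity

lemma PrB_le_one {p : Fin n → ℝ} (hp : ∀ i, 0 ≤ p i ∧ p i ≤ 1) (Q : ℕ → Prop) :
    PrB p Q ≤ 1 := by
  rw [← sum_W p]
  apply Finset.sum_le_sum
  intro v _
  have h := W_nonneg hp v
  by_cases hq : Q (countA v) <;> simp [hq, h]

lemma PrB_mono {p : Fin n → ℝ} (hp : ∀ i, 0 ≤ p i ∧ p i ≤ 1) {Q Q' : ℕ → Prop}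
    (h : ∀ x, Q x → Q' x) : PrB p Q ≤ PrB p Q' := by
  apply Finset.sum_le_sum
  intro v _
  have hw := W_nonneg hp v
  by_cases hq : Q (countA v)
  · rw [if_pos hq, if_pos (h _ hq)]
  · have : (if Q (countA v) then (1:ℝ) else 0) = 0 := if_neg hq
    rw [this, mul_zero]
    positivity

lemma PrB_compl {p : Fin n → ℝ} (Q : ℕ → Prop) :
    PrB p Q + PrB p (fun x => ¬ Q x) = 1 := by
  rw [PrB, PrB, ← Finset.sum_add_distrib]
  conv_rhs => rw [← sum_W p]
  refine Finset.sum_congr rfl fun v _ => ?_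
  by_cases hq : Q (countA v) <;> simp [hq]

/-- Chebyshev's inequality for `countA`. -/
lemma PrB_cheb {p : Fin n → ℝ} (hp : ∀ i, 0 ≤ p i ∧ p i ≤ 1) {Q : ℕ → Prop}
    {t : ℝ} (ht : 0 < t) (hQ : ∀ x : ℕ, Q x → t ≤ |(x : ℝ) - meanW p|) :
    PrB p Q ≤ n / (4 * t ^ 2) := by
  have hstep : PrB p Q ≤ ∑ v : Fin n → Bool, W p v * (((countA v : ℝ) - meanW p)^2 / t^2) := by
    apply Finset.sum_le_sum
    intro v _
    have hw := W_nonneg hp v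
    by_cases hq : Q (countA v)
    · rw [if_pos hq]
      apply mul_le_mul_of_nonneg_left _ hw
      have h1 := hQ _ hq
      rw [le_div_iff₀ (by positivity), one_mul]
      calc t^2 ≤ |(countA v : ℝ) - meanW p|^2 := by
            apply pow_le_pow_left₀ ht.le h1
        _ = ((countA v : ℝ) - meanW p)^2 := sq_abs _
    · rw [if_neg hq, mul_zero]
      positivity
  have h2 : ∑ v : Fin n → Bool, W p v * (((countA v : ℝ) - meanW p)^2 / t^2)
      = (∑ i, p i * (1 - p i)) / t^2 := by
    rw [← var_W p, Finset.sum_div]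
    refine Finset.sum_congr rfl fun v _ => ?_
    ring
  have h3 : (∑ i, p i * (1 - p i)) ≤ (n : ℝ) / 4 := by
    calc (∑ i, p i * (1 - p i)) ≤ ∑ _i : Fin n, (1:ℝ)/4 := by
          apply Finset.sum_le_sum
          intro i _
          nlinarith [sq_nonneg (p i - 1/2)]
      _ = (n:ℝ)/4 := by simp; ring
  calc PrB p Q ≤ (∑ i, p i * (1 - p i)) / t^2 := by rw [← h2]; exact hstep
    _ ≤ ((n:ℝ)/4) / t^2 := by gcongr
    _ = n / (4 * t^2) := by ring

end PrB

section Reduction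
variable {n : ℕ}

/-- If a strict majority `D` of the agents all vote `A` (if `b`) resp. `R` (if `¬ b`)
surely, then `A` wins with probability `1` resp. `0`. -/
lemma majority_sum (c : Fin n → ℝ) (D : Finset (Fin n)) (hD : n < 2 * D.card)
    (P : Prop) [Decidable P] (hc : ∀ i ∈ D, c i = if P then 1 else 0) :
    ∑ v : Fin n → Bool, (∏ i, if v i then c i else 1 - c i) *
      (if 2 * countA v > n then (1:ℝ) else 0) = if P then 1 else 0 := by
  by_cases hP : P
  · rw [if_pos hP]
    have key : ∀ v : Fin n → Bool, (∏ i, if v i then c i else 1 - c i) *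
        (if 2 * countA v > n then (1:ℝ) else 0) = ∏ i, if v i then c i else 1 - c i := by
      intro v
      by_cases hall : ∀ i ∈ D, v i = true
      · have hcnt : D.card ≤ countA v := by
          apply Finset.card_le_card
          intro i hi
          simp [countA, hall i hi]
        rw [if_pos (by omega), mul_one]
      · push_neg at hall
        obtain ⟨i, hiD, hvi⟩ := hall
        have : (if v i then c i else 1 - c i) = 0 := by
          simp only [Bool.not_eq_true] at hvi
          rw [hvi, if_neg (by simp), hc i hiD, if_pos hP]
          ring
        rw [Finset.prod_eq_zero (Finset.mem_univ i) this]
        ring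
    simp only [key]
    exact sum_W c
  · rw [if_neg hP]
    apply Finset.sum_eq_zero
    intro v _
    by_cases hwin : 2 * countA v > n
    · by_cases hall : ∀ i ∈ D, v i = false
      · exfalso
        have hsub : Finset.univ.filter (fun i => v i = true) ⊆ Finset.univ \ D := by
          intro i hi
          simp only [Finset.mem_filter] at hi
          simp only [Finset.mem_sdiff, Finset.mem_univ, true_and]
          intro hiD
          rw [hall i hiD] at hi
          simp at hi
        have hcnt : countA v ≤ n - D.card := by
          have := Finset.card_le_card hsub
          rwa [Finset.card_sdiff_of_subset (Finset.subset_univ D), Finset.card_univ, Fintype.card_fin] at this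
        have hDn : D.card ≤ n := by
          have := Finset.card_le_card (Finset.subset_univ D)
          rwa [Finset.card_univ, Fintype.card_fin] at this
        omega
      · push_neg at hall
        obtain ⟨i, hiD, hvi⟩ := hall
        simp only [Bool.not_eq_false] at hvi
        have : (if v i then c i else 1 - c i) = 0 := by
          rw [hvi, if_pos rfl, hc i hiD, if_neg hP]
        rw [Finset.prod_eq_zero (Finset.mem_univ i) this]
        ring
    · rw [if_neg hwin, mul_zero]

/-- Effective probability that agent `i` votes `A` in the first round in state `k`. -/
def mix (phH phL : ℝ) (k : Bool) (r : Bool → ℝ) : ℝ :=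
  sigP phH phL k * r true + (1 - sigP phH phL k) * r false

lemma mix_mem {phH phL : ℝ} {k : Bool} {r : Bool → ℝ}
    (h0 : 0 ≤ sigP phH phL k) (h1 : sigP phH phL k ≤ 1)
    (hr0 : ∀ m, 0 ≤ r m) (hr1 : ∀ m, r m ≤ 1) :
    0 ≤ mix phH phL k r ∧ mix phH phL k r ≤ 1 := by
  unfold mix
  constructor
  · have h2 := mul_nonneg h0 (hr0 true)
    have h3 := mul_nonneg (by linarith : (0:ℝ) ≤ 1 - sigP phH phL k) (hr0 false)
    linarith
  · nlinarith [hr0 true, hr0 false, hr1 true, hr1 false]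

/-- Marginalizing the signals: first-round votes are independent Bernoulli with
the mixed probabilities. -/
lemma signal_mix (phH phL : ℝ) (k : Bool) (r : Fin n → Bool → ℝ) (v : Fin n → Bool) :
    ∑ s : Fin n → Bool, sigWeight phH phL k s *
        (∏ i, if v i then r i (s i) else 1 - r i (s i))
      = W (fun i => mix phH phL k (r i)) v := by
  classical
  have h : ∀ s : Fin n → Bool, sigWeight phH phL k s *
      (∏ i, if v i then r i (s i) else 1 - r i (s i))
      = ∏ i, ((if s i then sigP phH phL k else 1 - sigP phH phL k) *
          (if v i then r i (s i) else 1 - r i (s i))) := by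
    intro s
    rw [sigWeight, ← Finset.prod_mul_distrib]
  simp only [h]
  rw [sum_pi_bool (fun i b => (if b then sigP phH phL k else 1 - sigP phH phL k) *
      (if v i then r i b else 1 - r i b))]
  unfold W
  refine Finset.prod_congr rfl fun i _ => ?_
  by_cases hv : v i <;> simp [hv, mix] <;> ring

/-- Reduction: if all members of a strict majority `D` vote in the second round
according to the public threshold rule `Q`, then `A` wins iff `Q x` holds. -/
lemma prAwins_reduction (phH phL : ℝ) (σ : TwoRound n) (k : Bool)
    (Q : ℕ → Prop) [DecidablePred Q] (D : Finset (Fin n)) (hD : n < 2 * D.card)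
    (hs2 : ∀ i ∈ D, ∀ m x, σ.s2 i m x = if Q x then 1 else 0) :
    prAwins phH phL σ k = PrB (fun i => mix phH phL k (σ.s1 i)) Q := by
  classical
  unfold prAwins
  have step1 : ∀ (s v1 : Fin n → Bool),
      ∑ v2 : Fin n → Bool, sigWeight phH phL k s *
        (∏ i, if v1 i then σ.s1 i (s i) else 1 - σ.s1 i (s i)) *
        (∏ i, if v2 i then σ.s2 i (s i) (countA v1) else 1 - σ.s2 i (s i) (countA v1)) *
        (if 2 * countA v2 > n then (1:ℝ) else 0)
      = sigWeight phH phL k s *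
        (∏ i, if v1 i then σ.s1 i (s i) else 1 - σ.s1 i (s i)) *
        (if Q (countA v1) then 1 else 0) := by
    intro s v1
    have hmaj := majority_sum (fun i => σ.s2 i (s i) (countA v1)) D hD (Q (countA v1))
      (fun i hi => hs2 i hi (s i) (countA v1))
    calc ∑ v2 : Fin n → Bool, sigWeight phH phL k s *
        (∏ i, if v1 i then σ.s1 i (s i) else 1 - σ.s1 i (s i)) *
        (∏ i, if v2 i then σ.s2 i (s i) (countA v1) else 1 - σ.s2 i (s i) (countA v1)) *
        (if 2 * countA v2 > n then (1:ℝ) else 0)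
        = sigWeight phH phL k s *
          (∏ i, if v1 i then σ.s1 i (s i) else 1 - σ.s1 i (s i)) *
          ∑ v2 : Fin n → Bool,
            (∏ i, if v2 i then σ.s2 i (s i) (countA v1) else 1 - σ.s2 i (s i) (countA v1)) *
            (if 2 * countA v2 > n then (1:ℝ) else 0) := by
          rw [Finset.mul_sum]
          refine Finset.sum_congr rfl fun v2 _ => ?_
          ring
      _ = _ := by rw [hmaj]
  simp only [step1]
  rw [Finset.sum_comm]
  unfold PrB
  refine Finset.sum_congr rfl fun v1 _ => ?_
  rw [← signal_mix phH phL k (fun i => σ.s1 i) v1, Finset.sum_mul]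
  refine Finset.sum_congr rfl fun s _ => ?_
  ring

end Reduction

section Bounds
variable {n : ℕ}

lemma sigWeight_eq_W (phH phL : ℝ) (k : Bool) (s : Fin n → Bool) :
    sigWeight phH phL k s = W (fun _ => sigP phH phL k) s := rfl

lemma sigP_mem {phH phL : ℝ} (h0 : 0 < phL) (h : phL < phH) (h1 : phH < 1) (k : Bool) :
    0 ≤ sigP phH phL k ∧ sigP phH phL k ≤ 1 := by
  unfold sigP; cases k <;> simp <;> constructor <;> linarith

lemma prAwins_regroup (phH phL : ℝ) (σ : TwoRound n) (k : Bool) :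
    prAwins phH phL σ k = ∑ s : Fin n → Bool, sigWeight phH phL k s *
      ∑ v1 : Fin n → Bool, (∏ i, if v1 i then σ.s1 i (s i) else 1 - σ.s1 i (s i)) *
        ∑ v2 : Fin n → Bool,
          (∏ i, if v2 i then σ.s2 i (s i) (countA v1) else 1 - σ.s2 i (s i) (countA v1)) *
          (if 2 * countA v2 > n then (1:ℝ) else 0) := by
  unfold prAwins
  simp only [Finset.mul_sum]
  refine Finset.sum_congr rfl fun s _ => Finset.sum_congr rfl fun v1 _ =>
    Finset.sum_congr rfl fun v2 _ => by ring

lemma prAwins_nonneg {phH phL : ℝ} (h0 : 0 < phL) (h : phL < phH) (h1 : phH < 1)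
    (σ : TwoRound n) (k : Bool) : 0 ≤ prAwins phH phL σ k := by
  rw [prAwins_regroup]
  have hsig := sigP_mem h0 h h1 k
  apply Finset.sum_nonneg
  intro s _
  apply mul_nonneg (W_nonneg (fun _ => hsig) s)
  apply Finset.sum_nonneg
  intro v1 _
  apply mul_nonneg (W_nonneg (fun i => ⟨σ.s1_nonneg i (s i), σ.s1_le_one i (s i)⟩) v1)
  apply Finset.sum_nonneg
  intro v2 _
  apply mul_nonneg (W_nonneg (fun i => ⟨σ.s2_nonneg i (s i) (countA v1),
    σ.s2_le_one i (s i) (countA v1)⟩) v2)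
  positivity

lemma prAwins_le_one {phH phL : ℝ} (h0 : 0 < phL) (h : phL < phH) (h1 : phH < 1)
    (σ : TwoRound n) (k : Bool) : prAwins phH phL σ k ≤ 1 := by
  rw [prAwins_regroup]
  have hsig := sigP_mem h0 h h1 k
  have step : ∀ s : Fin n → Bool, sigWeight phH phL k s *
      (∑ v1 : Fin n → Bool, (∏ i, if v1 i then σ.s1 i (s i) else 1 - σ.s1 i (s i)) *
        ∑ v2 : Fin n → Bool,
          (∏ i, if v2 i then σ.s2 i (s i) (countA v1) else 1 - σ.s2 i (s i) (countA v1)) *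
          (if 2 * countA v2 > n then (1:ℝ) else 0))
      ≤ sigWeight phH phL k s := by
    intro s
    have hw1 : ∀ v1 : Fin n → Bool,
        0 ≤ ∏ i, if v1 i then σ.s1 i (s i) else 1 - σ.s1 i (s i) :=
      fun v1 => W_nonneg (fun i => ⟨σ.s1_nonneg i (s i), σ.s1_le_one i (s i)⟩) v1
    have inner2 : ∀ v1 : Fin n → Bool, (∑ v2 : Fin n → Bool,
        (∏ i, if v2 i then σ.s2 i (s i) (countA v1) else 1 - σ.s2 i (s i) (countA v1)) *
          (if 2 * countA v2 > n then (1:ℝ) else 0)) ≤ 1 := by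
      intro v1
      have := PrB_le_one (fun i => ⟨σ.s2_nonneg i (s i) (countA v1),
        σ.s2_le_one i (s i) (countA v1)⟩) (fun x => 2 * x > n)
      simpa [PrB, W] using this
    have hin : (∑ v1 : Fin n → Bool, (∏ i, if v1 i then σ.s1 i (s i) else 1 - σ.s1 i (s i)) *
        ∑ v2 : Fin n → Bool,
          (∏ i, if v2 i then σ.s2 i (s i) (countA v1) else 1 - σ.s2 i (s i) (countA v1)) *
          (if 2 * countA v2 > n then (1:ℝ) else 0)) ≤ 1 := by
      calc _ ≤ ∑ v1 : Fin n → Bool,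
            (∏ i, if v1 i then σ.s1 i (s i) else 1 - σ.s1 i (s i)) := by
            apply Finset.sum_le_sum
            intro v1 _
            have := mul_le_mul_of_nonneg_left (inner2 v1) (hw1 v1)
            simpa using this
        _ = 1 := sum_W (fun i => σ.s1 i (s i))
    calc sigWeight phH phL k s * _ ≤ sigWeight phH phL k s * 1 := by
          apply mul_le_mul_of_nonneg_left hin
          rw [sigWeight_eq_W]
          exact W_nonneg (fun _ => hsig) s
      _ = sigWeight phH phL k s := mul_one _
  calc _ ≤ ∑ s : Fin n → Bool, sigWeight phH phL k s := Finset.sum_le_sum fun s _ => step s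
    _ = 1 := sum_W (fun _ : Fin n => sigP phH phL k)

end Bounds

section Coord
variable {n : ℕ}

lemma W_split (p : Fin n → ℝ) (v : Fin n → Bool) (j : Fin n) :
    W p v = (if v j then p j else 1 - p j) *
      ∏ i ∈ Finset.univ.erase j, (if v i then p i else 1 - p i) := by
  rw [W]
  exact (Finset.mul_prod_erase Finset.univ _ (Finset.mem_univ j)).symm

lemma W_affine {p p0 p1 : Fin n → ℝ} {j : Fin n} {β : ℝ}
    (hp : p j = β) (hp0 : p0 j = 0) (hp1 : p1 j = 1)
    (h0 : ∀ i, i ≠ j → p0 i = p i) (h1 : ∀ i, i ≠ j → p1 i = p i) (v : Fin n → Bool) :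
    W p v = (1 - β) * W p0 v + β * W p1 v := by
  rw [W_split p v j, W_split p0 v j, W_split p1 v j]
  have e0 : ∏ i ∈ Finset.univ.erase j, (if v i then p0 i else 1 - p0 i)
      = ∏ i ∈ Finset.univ.erase j, (if v i then p i else 1 - p i) := by
    refine Finset.prod_congr rfl fun i hi => ?_
    rw [h0 i (Finset.ne_of_mem_erase hi)]
  have e1 : ∏ i ∈ Finset.univ.erase j, (if v i then p1 i else 1 - p1 i)
      = ∏ i ∈ Finset.univ.erase j, (if v i then p i else 1 - p i) := by
    refine Finset.prod_congr rfl fun i hi => ?_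
    rw [h1 i (Finset.ne_of_mem_erase hi)]
  rw [e0, e1, hp, hp0, hp1]
  cases hv : v j <;> simp <;> ring

lemma PrB_affine {p p0 p1 : Fin n → ℝ} {j : Fin n} {β : ℝ}
    (hp : p j = β) (hp0 : p0 j = 0) (hp1 : p1 j = 1)
    (h0 : ∀ i, i ≠ j → p0 i = p i) (h1 : ∀ i, i ≠ j → p1 i = p i) (Q : ℕ → Prop) :
    PrB p Q = (1 - β) * PrB p0 Q + β * PrB p1 Q := by
  unfold PrB
  rw [Finset.mul_sum, Finset.mul_sum, ← Finset.sum_add_distrib]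
  refine Finset.sum_congr rfl fun v _ => ?_
  rw [W_affine hp hp0 hp1 h0 h1 v]
  ring

lemma countA_update_false {v : Fin n → Bool} {j : Fin n} (h : v j = true) :
    countA (Function.update v j false) + 1 = countA v := by
  classical
  have hset : Finset.univ.filter (fun i => Function.update v j false i = true)
      = (Finset.univ.filter (fun i => v i = true)).erase j := by
    ext i
    simp only [Finset.mem_filter, Finset.mem_erase, Finset.mem_univ, true_and]
    by_cases hij : i = j
    · subst hij
      simp [Function.update_self]
    · simp [Function.update_of_ne hij, hij]
  rw [countA, countA, hset]
  exact Finset.card_erase_add_one (by simp [Finset.mem_filter, h])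

lemma PrB_shift {p0 p1 : Fin n → ℝ} {j : Fin n}
    (hp0 : p0 j = 0) (hp1 : p1 j = 1)
    (h01 : ∀ i, i ≠ j → p0 i = p1 i) (τ : ℕ) :
    PrB p1 (fun x => τ + 1 ≤ x) = PrB p0 (fun x => τ ≤ x) := by
  classical
  have hinv : Function.Involutive (fun v : Fin n → Bool => Function.update v j (!(v j))) := by
    intro v
    funext i
    by_cases hij : i = j
    · subst hij; simp [Function.update_self]
    · simp [Function.update_of_ne hij]
  apply Fintype.sum_bijective _ hinv.bijective
  intro v
  simp only []
  by_cases hvj : v j = true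
  · have hj' : Function.update v j (!(v j)) j = false := by simp [hvj]
    have hWv : W p1 v = W p0 (Function.update v j (!(v j))) := by
      rw [W_split p1 v j, W_split p0 _ j, if_pos hvj, hp1,
          if_neg (by rw [hj']; simp), hp0, sub_zero, one_mul, one_mul]
      refine Finset.prod_congr rfl fun i hi => ?_
      have hij := Finset.ne_of_mem_erase hi
      rw [Function.update_of_ne hij, h01 i hij]
    rw [hWv]
    congr 1
    have hcnt : countA (Function.update v j (!(v j))) + 1 = countA v := by
      rw [hvj]
      exact countA_update_false hvj
    by_cases hτ : τ + 1 ≤ countA v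
    · rw [if_pos hτ, if_pos (by omega)]
    · rw [if_neg hτ, if_neg (by omega)]
  · have h0' : W p1 v = 0 := by
      rw [W_split p1 v j, if_neg hvj, hp1, sub_self, zero_mul]
    have h1' : W p0 (Function.update v j (!(v j))) = 0 := by
      have hj' : Function.update v j (!(v j)) j = true := by
        simp only [Bool.not_eq_true] at hvj
        simp [hvj]
      rw [W_split p0 _ j, if_pos hj', hp0, zero_mul]
    rw [h0', h1', zero_mul, zero_mul]

end Coord

section Devs
variable {n : ℕ}

/-- Deviation profile: members of `D` vote truthfully in round 1 and follow the
public rule `Q` in round 2; everyone else plays `σ`. -/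
def devD (σ : TwoRound n) (D : Finset (Fin n)) (Q : ℕ → Prop) : TwoRound n where
  s1 i m := if i ∈ D then (if m then 1 else 0) else σ.s1 i m
  s2 i m x := if i ∈ D then (if Q x then 1 else 0) else σ.s2 i m x
  s1_nonneg i m := by
    by_cases hi : i ∈ D
    · simp only [if_pos hi]; split <;> norm_num
    · simp only [if_neg hi]; exact σ.s1_nonneg i m
  s1_le_one i m := by
    by_cases hi : i ∈ D
    · simp only [if_pos hi]; split <;> norm_num
    · simp only [if_neg hi]; exact σ.s1_le_one i m
  s2_nonneg i m x := by
    by_cases hi : i ∈ D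
    · simp only [if_pos hi]; split <;> norm_num
    · simp only [if_neg hi]; exact σ.s2_nonneg i m x
  s2_le_one i m x := by
    by_cases hi : i ∈ D
    · simp only [if_pos hi]; split <;> norm_num
    · simp only [if_neg hi]; exact σ.s2_le_one i m x

/-- Deviation profile for the grand coalition: agent `j` votes `A` with
probability `β` in round 1 ignoring her signal, all others vote truthfully;
in round 2 everyone follows the public threshold rule `τ ≤ x`. -/
def dev3 (j : Fin n) (β : ℝ) (hβ0 : 0 ≤ β) (hβ1 : β ≤ 1) (τ : ℕ) : TwoRound n where
  s1 i m := if i = j then β else (if m then 1 else 0)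
  s2 _ _ x := if τ ≤ x then 1 else 0
  s1_nonneg i m := by split_ifs <;> first | assumption | norm_num
  s1_le_one i m := by split_ifs <;> first | assumption | norm_num
  s2_nonneg _ _ x := by split <;> norm_num
  s2_le_one _ _ x := by split <;> norm_num

lemma mix_truthful (phH phL : ℝ) (k : Bool) :
    mix phH phL k (fun m => if m then (1:ℝ) else 0) = sigP phH phL k := by
  simp [mix]

lemma devD_prAwins (phH phL : ℝ) (σ : TwoRound n) (D : Finset (Fin n))
    (hD : n < 2 * D.card) (Q : ℕ → Prop) (k : Bool) :
    prAwins phH phL (devD σ D Q) k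
      = PrB (fun i => if i ∈ D then sigP phH phL k else mix phH phL k (σ.s1 i)) Q := by
  classical
  rw [prAwins_reduction phH phL (devD σ D Q) k Q D hD
    (fun i hi m x => by simp only [devD, if_pos hi])]
  unfold PrB
  refine Finset.sum_congr rfl fun v _ => ?_
  congr 1
  unfold W
  refine Finset.prod_congr rfl fun i _ => ?_
  by_cases hi : i ∈ D
  · simp only [devD, if_pos hi, mix_truthful]
  · simp only [devD, if_neg hi]

lemma dev3_prAwins (phH phL : ℝ) (hn : 1 ≤ n) (j : Fin n) (β : ℝ)
    (hβ0 : 0 ≤ β) (hβ1 : β ≤ 1) (τ : ℕ) (k : Bool) :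
    prAwins phH phL (dev3 j β hβ0 hβ1 τ) k
      = PrB (fun i => if i = j then β else sigP phH phL k) (fun x => τ ≤ x) := by
  classical
  rw [prAwins_reduction phH phL (dev3 j β hβ0 hβ1 τ) k (fun x => τ ≤ x) Finset.univ
    (by rw [Finset.card_univ, Fintype.card_fin]; omega)
    (fun i _ m x => by simp only [dev3])]
  unfold PrB
  refine Finset.sum_congr rfl fun v _ => ?_
  congr 1
  unfold W
  refine Finset.prod_congr rfl fun i _ => ?_
  by_cases hi : i = j
  · simp only [dev3, if_pos hi, mix]
    ring
  · simp only [dev3, if_neg hi, mix_truthful]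

lemma card_filter_le_of_range (a b : ℕ) :
    (Finset.univ.filter (fun i : Fin n => a ≤ (i:ℕ) ∧ (i:ℕ) < b)).card ≤ b - a := by
  classical
  have h : ∀ i ∈ Finset.univ.filter (fun i : Fin n => a ≤ (i:ℕ) ∧ (i:ℕ) < b),
      (i : ℕ) ∈ Finset.Ico a b := by
    intro i hi
    simp only [Finset.mem_filter] at hi
    simp [Finset.mem_Ico, hi.2.1, hi.2.2]
  calc (Finset.univ.filter (fun i : Fin n => a ≤ (i:ℕ) ∧ (i:ℕ) < b)).card
      ≤ (Finset.Ico a b).card := by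
        apply Finset.card_le_card_of_injOn (fun i : Fin n => (i:ℕ)) h
        intro i _ i' _ hii
        exact Fin.ext hii
    _ = b - a := Nat.card_Ico a b

/-- Sum of the `±d` indicator over a subset. -/
lemma sum_pm (D : Finset (Fin n)) (d : ℝ) :
    ∑ i : Fin n, (if i ∈ D then d else -d) = 2 * D.card * d - n * d := by
  classical
  have h : ∀ i : Fin n, (if i ∈ D then d else -d) = 2 * (if i ∈ D then d else 0) - d := by
    intro i
    split <;> ring
  simp only [h]
  rw [Finset.sum_sub_distrib]
  rw [← Finset.mul_sum, Finset.sum_ite_mem, Finset.univ_inter, Finset.sum_const]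
  simp [Finset.card_univ]
  ring

end Devs

section Tails
variable {n : ℕ}

lemma PrB_eq_one_sub {p : Fin n → ℝ} (Q : ℕ → Prop) :
    PrB p Q = 1 - PrB p (fun x => ¬ Q x) := by
  have := PrB_compl (p := p) Q
  linarith

lemma PrB_tail_ge {p : Fin n → ℝ} (hp : ∀ i, 0 ≤ p i ∧ p i ≤ 1) {τr t : ℝ}
    (ht : 0 < t) (h : meanW p + t ≤ τr) :
    PrB p (fun x => τr ≤ (x:ℝ)) ≤ n / (4 * t ^ 2) := by
  apply PrB_cheb hp ht
  intro x hx
  have : t ≤ (x:ℝ) - meanW p := by linarith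
  exact this.trans (le_abs_self _)

lemma PrB_head_lt {p : Fin n → ℝ} (hp : ∀ i, 0 ≤ p i ∧ p i ≤ 1) {τr t : ℝ}
    (ht : 0 < t) (h : τr ≤ meanW p - t) :
    PrB p (fun x => ¬ (τr ≤ (x:ℝ))) ≤ n / (4 * t ^ 2) := by
  apply PrB_cheb hp ht
  intro x hx
  push_neg at hx
  have : t ≤ meanW p - (x:ℝ) := by linarith
  calc t ≤ meanW p - (x:ℝ) := this
    _ ≤ |meanW p - (x:ℝ)| := le_abs_self _
    _ = |(x:ℝ) - meanW p| := abs_sub_comm _ _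

lemma PrB_tail_ge_nat {p : Fin n → ℝ} (hp : ∀ i, 0 ≤ p i ∧ p i ≤ 1) {t : ℝ} {τ0 : ℕ}
    (ht : 0 < t) (h : meanW p + t ≤ (τ0:ℝ)) :
    PrB p (fun x => τ0 ≤ x) ≤ n / (4 * t ^ 2) := by
  apply PrB_cheb hp ht
  intro x hx
  have hxr : (τ0:ℝ) ≤ (x:ℝ) := by exact_mod_cast hx
  have : t ≤ (x:ℝ) - meanW p := by linarith
  exact this.trans (le_abs_self _)

lemma PrB_head_lt_nat {p : Fin n → ℝ} (hp : ∀ i, 0 ≤ p i ∧ p i ≤ 1) {t : ℝ} {τ0 : ℕ}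
    (ht : 0 < t) (h : (τ0:ℝ) ≤ meanW p - t) :
    PrB p (fun x => ¬ (τ0 ≤ x)) ≤ n / (4 * t ^ 2) := by
  apply PrB_cheb hp ht
  intro x hx
  push_neg at hx
  have hxr : (x:ℝ) < (τ0:ℝ) := by exact_mod_cast hx
  have : t ≤ meanW p - (x:ℝ) := by linarith
  calc t ≤ meanW p - (x:ℝ) := this
    _ ≤ |meanW p - (x:ℝ)| := le_abs_self _
    _ = |(x:ℝ) - meanW p| := abs_sub_comm _ _

lemma PrB_zero_thr (p : Fin n → ℝ) : PrB p (fun x => 0 ≤ x) = 1 := by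
  unfold PrB
  have h := sum_W p
  conv_rhs => rw [← h]
  apply Finset.sum_congr rfl
  intro v _
  rw [if_pos, mul_one]
  exact Nat.zero_le _

lemma countA_le (v : Fin n → Bool) : countA v ≤ n := by
  unfold countA
  calc _ ≤ Finset.univ.card := Finset.card_le_card (Finset.filter_subset _ _)
    _ = n := by rw [Finset.card_univ, Fintype.card_fin]

lemma PrB_over_thr (p : Fin n → ℝ) : PrB p (fun x => n + 1 ≤ x) = 0 := by
  unfold PrB
  apply Finset.sum_eq_zero
  intro v _
  rw [if_neg (by have := countA_le v; omega), mul_zero]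

end Tails

section Util

lemma util_friendly (PH PL phH phL alphaF alphaU : ℝ) {n : ℕ} (σ : TwoRound n) (i : Fin n)
    (h : (i:ℕ) < numF alphaF n) :
    util PH PL phH phL alphaF alphaU σ i
      = PH * prAwins phH phL σ true + PL * prAwins phH phL σ false := by
  unfold util; rw [if_pos h]

lemma util_unfriendly (PH PL phH phL alphaF alphaU : ℝ) {n : ℕ} (σ : TwoRound n) (i : Fin n)
    (h1 : ¬ (i:ℕ) < numF alphaF n) (h2 : (i:ℕ) < numF alphaF n + numU alphaU n) :
    util PH PL phH phL alphaF alphaU σ i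
      = PH * (1 - prAwins phH phL σ true) + PL * (1 - prAwins phH phL σ false) := by
  unfold util; rw [if_neg h1, if_pos h2]

lemma util_contingent (PH PL phH phL alphaF alphaU : ℝ) {n : ℕ} (σ : TwoRound n) (i : Fin n)
    (h1 : ¬ (i:ℕ) < numF alphaF n) (h2 : ¬ (i:ℕ) < numF alphaF n + numU alphaU n) :
    util PH PL phH phL alphaF alphaU σ i = fidelity PH PL phH phL σ := by
  unfold util; rw [if_neg h1, if_neg h2]

end Util

section DevAnalysis
variable {n : ℕ}

/-- Analysis of the coalition deviation: a strict majority `D` votes truthfully in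
round 1 and follows the optimal public threshold rule in round 2.  The resulting
profile identifies the world state with high probability. -/
lemma devD_good {phH phL : ℝ} (hphL0 : 0 < phL) (hph : phL < phH) (hphH1 : phH < 1)
    (σ : TwoRound n) (D : Finset (Fin n)) (hD : n < 2 * D.card) :
    ∃ σ' : TwoRound n,
      (∀ i, i ∉ D → σ'.s1 i = σ.s1 i ∧ σ'.s2 i = σ.s2 i) ∧
      prAwins phH phL σ' false ≤ (n:ℝ) / ((phH - phL) * (2 * D.card - n))^2 ∧
      1 - (n:ℝ) / ((phH - phL) * (2 * D.card - n))^2 ≤ prAwins phH phL σ' true := by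
  classical
  have hd0 : 0 < phH - phL := by linarith
  have hcard : (0:ℝ) < 2 * D.card - n := by
    have : (n:ℝ) < 2 * D.card := by exact_mod_cast hD
    linarith
  set qT : Fin n → ℝ := fun i => if i ∈ D then sigP phH phL true else mix phH phL true (σ.s1 i) with hqT
  set qF : Fin n → ℝ := fun i => if i ∈ D then sigP phH phL false else mix phH phL false (σ.s1 i) with hqF
  have hqTmem : ∀ i, 0 ≤ qT i ∧ qT i ≤ 1 := by
    intro i
    rw [hqT]
    by_cases hi : i ∈ D
    · simp only [if_pos hi]
      exact sigP_mem hphL0 hph hphH1 true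
    · simp only [if_neg hi]
      exact mix_mem (sigP_mem hphL0 hph hphH1 true).1 (sigP_mem hphL0 hph hphH1 true).2
        (fun m => σ.s1_nonneg i m) (fun m => σ.s1_le_one i m)
  have hqFmem : ∀ i, 0 ≤ qF i ∧ qF i ≤ 1 := by
    intro i
    rw [hqF]
    by_cases hi : i ∈ D
    · simp only [if_pos hi]
      exact sigP_mem hphL0 hph hphH1 false
    · simp only [if_neg hi]
      exact mix_mem (sigP_mem hphL0 hph hphH1 false).1 (sigP_mem hphL0 hph hphH1 false).2
        (fun m => σ.s1_nonneg i m) (fun m => σ.s1_le_one i m)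
  have hgap : (phH - phL) * (2 * D.card - n) ≤ meanW qT - meanW qF := by
    have hpt : ∀ i : Fin n, (if i ∈ D then phH - phL else -(phH - phL)) ≤ qT i - qF i := by
      intro i
      rw [hqT, hqF]
      by_cases hi : i ∈ D
      · simp only [if_pos hi, sigP]
        norm_num
      · simp only [if_neg hi, mix, sigP]
        norm_num
        have h1 := σ.s1_nonneg i true
        have h2 := σ.s1_le_one i true
        have h3 := σ.s1_nonneg i false
        have h4 := σ.s1_le_one i false
        nlinarith
    calc (phH - phL) * (2 * D.card - n) = 2 * D.card * (phH - phL) - n * (phH - phL) := by ring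
      _ = ∑ i : Fin n, (if i ∈ D then phH - phL else -(phH - phL)) := (sum_pm D (phH - phL)).symm
      _ ≤ ∑ i : Fin n, (qT i - qF i) := Finset.sum_le_sum fun i _ => hpt i
      _ = meanW qT - meanW qF := by rw [meanW, meanW, Finset.sum_sub_distrib]
  clear_value qT qF
  obtain ⟨μT, hμT⟩ : ∃ x, meanW qT = x := ⟨_, rfl⟩
  obtain ⟨μF, hμF⟩ : ∃ x, meanW qF = x := ⟨_, rfl⟩
  rw [hμT, hμF] at hgap
  set τ1 : ℝ := (μT + μF) / 2 with hτ1
  set t : ℝ := (phH - phL) * (2 * D.card - n) / 2 with htdef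
  have ht0 : 0 < t := by rw [htdef]; positivity
  have hbound : (n:ℝ) / (4 * t^2) = (n:ℝ) / ((phH - phL) * (2 * D.card - n))^2 := by
    rw [htdef]; ring_nf
  clear_value τ1 t
  refine ⟨devD σ D (fun x => τ1 ≤ (x:ℝ)), ?_, ?_, ?_⟩
  · intro i hi
    constructor <;> funext m
    · simp only [devD, if_neg hi]
    · funext x
      simp only [devD, if_neg hi]
  · rw [devD_prAwins phH phL σ D hD _ false, ← hqF]
    calc PrB qF (fun x => τ1 ≤ (x:ℝ)) ≤ (n:ℝ) / (4 * t^2) := by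
          apply PrB_tail_ge hqFmem ht0
          rw [hμF, hτ1, htdef]
          linarith
      _ = _ := hbound
  · rw [devD_prAwins phH phL σ D hD _ true, ← hqT, PrB_eq_one_sub]
    have hhead : PrB qT (fun x => ¬ τ1 ≤ (x:ℝ)) ≤ (n:ℝ) / (4 * t^2) := by
      apply PrB_head_lt hqTmem ht0
      rw [hμT, hτ1, htdef]
      linarith
    linarith [hbound ▸ hhead]

end DevAnalysis

section Dev3Analysis

lemma tail_simp {N dd t : ℝ} (hN : 0 < N) (hdd : 0 < dd) (ht : dd * N / 4 ≤ t) :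
    N / (4 * t^2) ≤ 4 / (dd^2 * N) := by
  have hq : 0 < dd * N / 4 := by
    have := mul_pos hdd hN
    linarith
  have ht0 : 0 < t := lt_of_lt_of_le hq ht
  rw [div_le_div_iff₀ (by nlinarith [pow_pos ht0 2]) (by nlinarith [pow_pos hdd 2, mul_pos (pow_pos hdd 2) hN])]
  nlinarith [mul_le_mul ht ht hq.le ht0.le]

set_option maxHeartbeats 1600000 in
/-- Analysis of the grand-coalition deviation with exact utility matching:
there is a profile whose probability of `A` winning, averaged over the prior,
is exactly `c`, while the fidelity is near-perfect. -/
lemma dev3_good {PH PL phH phL : ℝ} (hPH : 0 < PH) (hPL : 0 < PL) (hPsum : PH + PL = 1)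
    (hphL0 : 0 < phL) (hph : phL < phH) (hphH1 : phH < 1)
    {n : ℕ} (hn1 : 1 ≤ n) (hn8 : 8 ≤ (phH - phL) * n)
    {c : ℝ} (h0c : 0 < c) (hc1 : c ≤ 1) :
    ∃ σ' : TwoRound n,
      PH * prAwins phH phL σ' true + PL * prAwins phH phL σ' false = c ∧
      (prAwins phH phL σ' false ≤ 4 / ((phH - phL)^2 * n) ∨
        1 - 4 / ((phH - phL)^2 * n) ≤ prAwins phH phL σ' true) := by
  classical
  have hd0 : 0 < phH - phL := by linarith
  have hn0 : (0:ℝ) < n := by exact_mod_cast hn1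
  set j : Fin n := ⟨0, hn1⟩ with hj
  -- the two extreme first-round profiles for the designated agent
  set P0T : Fin n → ℝ := fun i => if i = j then 0 else sigP phH phL true with hP0T
  set P0F : Fin n → ℝ := fun i => if i = j then 0 else sigP phH phL false with hP0F
  set P1T : Fin n → ℝ := fun i => if i = j then 1 else sigP phH phL true with hP1T
  set P1F : Fin n → ℝ := fun i => if i = j then 1 else sigP phH phL false with hP1F
  have hmemT : ∀ i, 0 ≤ P0T i ∧ P0T i ≤ 1 := by
    intro i
    rw [hP0T]
    dsimp only
    split
    · norm_num
    · exact sigP_mem hphL0 hph hphH1 true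
  have hmemF : ∀ i, 0 ≤ P0F i ∧ P0F i ≤ 1 := by
    intro i
    rw [hP0F]
    dsimp only
    split
    · norm_num
    · exact sigP_mem hphL0 hph hphH1 false
  -- means
  have hmean : ∀ (z : ℝ), meanW (fun i : Fin n => if i = j then 0 else z) = n * z - z := by
    intro z
    rw [meanW]
    have hpt : ∀ i : Fin n, (if i = j then (0:ℝ) else z) = z - (if i = j then z else 0) := by
      intro i; split <;> ring
    rw [Finset.sum_congr rfl fun i _ => hpt i, Finset.sum_sub_distrib]
    rw [Finset.sum_ite_eq' Finset.univ j (fun _ => z), if_pos (Finset.mem_univ j)]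
    simp [Finset.card_univ, mul_comm]
  have hmeanT : meanW P0T = n * phH - phH := by
    rw [hP0T]
    have := hmean phH
    simpa [sigP] using this
  have hmeanF : meanW P0F = n * phL - phL := by
    rw [hP0F]
    have := hmean phL
    simpa [sigP] using this
  -- the midpoint natural threshold
  set τ0 : ℕ := ⌈(n:ℝ) * ((phH + phL) / 2)⌉₊ with hτ0
  have hτ0lb : (n:ℝ) * ((phH + phL) / 2) ≤ τ0 := Nat.le_ceil _
  have hτ0ub : (τ0:ℝ) < (n:ℝ) * ((phH + phL) / 2) + 1 :=
    Nat.ceil_lt_add_one (by nlinarith)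
  -- tail bounds at τ0
  have htailF : PrB P0F (fun x => τ0 ≤ x) ≤ 4 / ((phH - phL)^2 * n) := by
    have ht : (0:ℝ) < n * (phH - phL) / 2 := by nlinarith [mul_pos hn0 hd0]
    have h1 : meanW P0F + n * (phH - phL) / 2 ≤ (τ0:ℝ) := by
      rw [hmeanF]
      have : (n:ℝ) * phL - phL + n * (phH - phL)/2 ≤ n * ((phH + phL)/2) := by
        nlinarith
      linarith
    calc PrB P0F (fun x => τ0 ≤ x) ≤ (n:ℝ) / (4 * (n * (phH - phL) / 2)^2) :=
          PrB_tail_ge_nat hmemF ht h1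
      _ ≤ 4 / ((phH - phL)^2 * n) := by
          apply tail_simp hn0 hd0
          nlinarith
  have hheadT : PrB P0T (fun x => ¬ τ0 ≤ x) ≤ 4 / ((phH - phL)^2 * n) := by
    set t : ℝ := n * (phH - phL) / 2 - 2 with htdef
    have ht : (0:ℝ) < t := by rw [htdef]; nlinarith
    have h1 : (τ0:ℝ) ≤ meanW P0T - t := by
      rw [hmeanT, htdef]
      nlinarith
    calc PrB P0T (fun x => ¬ τ0 ≤ x) ≤ (n:ℝ) / (4 * t^2) := PrB_head_lt_nat hmemT ht h1
      _ ≤ 4 / ((phH - phL)^2 * n) := by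
          apply tail_simp hn0 hd0
          rw [htdef]
          nlinarith
  -- the step function `Ghat`
  set Ghat : ℕ → ℝ := fun τ => PH * PrB P0T (fun x => τ ≤ x) + PL * PrB P0F (fun x => τ ≤ x)
    with hGhat
  have hGhat0 : Ghat 0 = 1 := by
    rw [hGhat]
    dsimp only
    rw [PrB_zero_thr, PrB_zero_thr]
    linarith
  have hGhatn : Ghat (n + 1) = 0 := by
    rw [hGhat]
    dsimp only
    rw [PrB_over_thr, PrB_over_thr]
    ring
  have hGmono : ∀ τ : ℕ, Ghat (τ + 1) ≤ Ghat τ := by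
    intro τ
    rw [hGhat]
    dsimp only
    have h1 := PrB_mono hmemT (Q := fun x => τ + 1 ≤ x) (Q' := fun x => τ ≤ x)
      (fun x hx => by omega)
    have h2 := PrB_mono hmemF (Q := fun x => τ + 1 ≤ x) (Q' := fun x => τ ≤ x)
      (fun x hx => by omega)
    nlinarith
  have hex : ∃ τ : ℕ, Ghat (τ + 1) < c := ⟨n, by rw [hGhatn]; exact h0c⟩
  set τs : ℕ := Nat.find hex with hτs
  have hfind : Ghat (τs + 1) < c := Nat.find_spec hex
  have hup : c ≤ Ghat τs := by
    rcases Nat.eq_zero_or_pos τs with h0 | hpos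
    · rw [h0, hGhat0]; exact hc1
    · obtain ⟨k, hk⟩ := Nat.exists_eq_add_of_lt hpos
      have hmin := Nat.find_min hex (m := τs - 1) (by omega)
      push_neg at hmin
      have : τs - 1 + 1 = τs := by omega
      rwa [this] at hmin
  -- the interpolation parameter
  set β : ℝ := (c - Ghat (τs + 1)) / (Ghat τs - Ghat (τs + 1)) with hβ
  have hden : 0 < Ghat τs - Ghat (τs + 1) := by linarith
  have hβ0 : 0 ≤ β := by
    rw [hβ]
    apply div_nonneg (by linarith) hden.le
  have hβ1 : β ≤ 1 := by
    rw [hβ, div_le_one hden]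
    linarith
  have hv0T : P0T j = 0 := by rw [hP0T]; simp
  have hv0F : P0F j = 0 := by rw [hP0F]; simp
  have hv1T : P1T j = 1 := by rw [hP1T]; simp
  have hv1F : P1F j = 1 := by rw [hP1F]; simp
  have hoffT : ∀ i, i ≠ j → P0T i = P1T i := by
    intro i hi; rw [hP0T, hP1T]; simp [hi]
  have hoffF : ∀ i, i ≠ j → P0F i = P1F i := by
    intro i hi; rw [hP0F, hP1F]; simp [hi]
  have hAwT : prAwins phH phL (dev3 j β hβ0 hβ1 (τs + 1)) true
      = (1 - β) * PrB P0T (fun x => τs + 1 ≤ x) + β * PrB P0T (fun x => τs ≤ x) := by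
    rw [dev3_prAwins phH phL hn1 j β hβ0 hβ1 (τs + 1) true]
    rw [PrB_affine (p := fun i => if i = j then β else sigP phH phL true)
      (p0 := P0T) (p1 := P1T) (j := j) (β := β)
      (by simp) hv0T hv1T
      (fun i hi => by rw [hP0T]; simp [hi]) (fun i hi => by rw [hP1T]; simp [hi])]
    rw [PrB_shift hv0T hv1T hoffT τs]
  have hAwF : prAwins phH phL (dev3 j β hβ0 hβ1 (τs + 1)) false
      = (1 - β) * PrB P0F (fun x => τs + 1 ≤ x) + β * PrB P0F (fun x => τs ≤ x) := by
    rw [dev3_prAwins phH phL hn1 j β hβ0 hβ1 (τs + 1) false]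
    rw [PrB_affine (p := fun i => if i = j then β else sigP phH phL false)
      (p0 := P0F) (p1 := P1F) (j := j) (β := β)
      (by simp) hv0F hv1F
      (fun i hi => by rw [hP0F]; simp [hi]) (fun i hi => by rw [hP1F]; simp [hi])]
    rw [PrB_shift hv0F hv1F hoffF τs]
  refine ⟨dev3 j β hβ0 hβ1 (τs + 1), ?_, ?_⟩
  · rw [hAwT, hAwF]
    have hexp : PH * ((1 - β) * PrB P0T (fun x => τs + 1 ≤ x) + β * PrB P0T (fun x => τs ≤ x))
        + PL * ((1 - β) * PrB P0F (fun x => τs + 1 ≤ x) + β * PrB P0F (fun x => τs ≤ x))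
        = (1 - β) * Ghat (τs + 1) + β * Ghat τs := by
      rw [hGhat]
      dsimp only
      ring
    rw [hexp, hβ]
    field_simp
    ring
  · rcases le_or_gt τ0 τs with hcase | hcase
    · left
      rw [hAwF]
      have hm1 := PrB_mono hmemF (Q := fun x => τs + 1 ≤ x) (Q' := fun x => τs ≤ x)
        (fun x hx => by omega)
      have hm2 := PrB_mono hmemF (Q := fun x => τs ≤ x) (Q' := fun x => τ0 ≤ x)
        (fun x hx => by omega)
      nlinarith [PrB_nonneg hmemF (fun x : ℕ => τs + 1 ≤ x),
        PrB_nonneg hmemF (fun x : ℕ => τs ≤ x)]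
    · right
      rw [hAwT]
      have hm1 := PrB_mono hmemT (Q := fun x => τs + 1 ≤ x) (Q' := fun x => τs ≤ x)
        (fun x hx => by omega)
      have hm2 := PrB_mono hmemT (Q := fun x => τ0 ≤ x) (Q' := fun x => τs + 1 ≤ x)
        (fun x hx => by omega)
      have hcompl := PrB_eq_one_sub (p := P0T) (fun x : ℕ => τ0 ≤ x)
      nlinarith [PrB_le_one hmemT (fun x : ℕ => τs ≤ x)]

end Dev3Analysis

section MainBound

lemma B_le_theta {N dd g X : ℝ} (hN : 0 < N) (hdd : 0 < dd) (hg : 0 < g) (hg1 : g ≤ 1)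
    (hX : g * N ≤ X) : N / (dd * X)^2 ≤ 4 / ((dd * g)^2 * N) := by
  have hX0 : 0 < X := lt_of_lt_of_le (mul_pos hg hN) hX
  rw [div_le_div_iff₀ (by nlinarith [pow_pos (mul_pos hdd hX0) 2])
    (by nlinarith [pow_pos (mul_pos hdd hg) 2, mul_pos (pow_pos (mul_pos hdd hg) 2) hN])]
  have key : (dd * (g * N))^2 ≤ (dd * X)^2 := by
    have h1 : 0 ≤ dd * (g * N) := by positivity
    have h2 : dd * (g * N) ≤ dd * X := by nlinarith
    nlinarith
  nlinarith [key]

set_option maxHeartbeats 1600000 in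
lemma fidelity_lower
    (PH PL phH phL alphaF alphaU : ℝ)
    (hPH : 0 < PH) (hPL : 0 < PL) (hPsum : PH + PL = 1)
    (hphL0 : 0 < phL) (hph : phL < phH) (hphH1 : phH < 1)
    (halphaF0 : 0 ≤ alphaF) (halphaF : alphaF < 1 / 2)
    (halphaU0 : 0 ≤ alphaU) (halphaU : alphaU < 1 / 2)
    {n : ℕ} (hn1 : 1 ≤ n) (hn8 : 8 ≤ (phH - phL) * n)
    (hθ1 : 4 / (((phH - phL) * min (1 - 2*alphaU) (1 - 2*alphaF))^2 * n) < 1)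
    (σ : TwoRound n) (ε : ℝ) (hε : 0 ≤ ε)
    (hBNE : IsEpsStrongBNE PH PL phH phL alphaF alphaU σ ε) :
    1 - 2 * (4 / (((phH - phL) * min (1 - 2*alphaU) (1 - 2*alphaF))^2 * n)) - ε
      ≤ fidelity PH PL phH phL σ := by
  classical
  have hd0 : 0 < phH - phL := by linarith
  have hn0 : (0:ℝ) < n := by exact_mod_cast hn1
  have hγU : (0:ℝ) < 1 - 2*alphaU := by linarith
  have hγF : (0:ℝ) < 1 - 2*alphaF := by linarith
  have hγm0 : 0 < min (1 - 2*alphaU) (1 - 2*alphaF) := lt_min hγU hγF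
  have hγm1 : min (1 - 2*alphaU) (1 - 2*alphaF) ≤ 1 := le_trans (min_le_left _ _) (by linarith)
  obtain ⟨θ, hθdef⟩ :
      ∃ x : ℝ, x = 4 / (((phH - phL) * min (1 - 2*alphaU) (1 - 2*alphaF))^2 * n) := ⟨_, rfl⟩
  rw [← hθdef] at hθ1 ⊢
  have hθ0 : 0 < θ := by
    rw [hθdef]
    have := mul_pos hd0 hγm0
    have := pow_pos (mul_pos hd0 hγm0) 2
    positivity
  have hθsum : PH * θ + PL * θ = θ := by
    calc PH * θ + PL * θ = (PH + PL) * θ := by ring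
      _ = 1 * θ := by rw [hPsum]
      _ = θ := one_mul θ
  -- basic bounds on the equilibrium outcome probabilities
  have hp0 := prAwins_nonneg hphL0 hph hphH1 σ true
  have hp1 := prAwins_le_one hphL0 hph hphH1 σ true
  have hq0 := prAwins_nonneg hphL0 hph hphH1 σ false
  have hq1 := prAwins_le_one hphL0 hph hphH1 σ false
  -- counting
  have hUr : (numU alphaU n : ℝ) ≤ alphaU * n := by
    rw [numU]
    exact Nat.floor_le (mul_nonneg halphaU0 (Nat.cast_nonneg n))
  have hFr : (numF alphaF n : ℝ) ≤ alphaF * n := by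
    rw [numF]
    exact Nat.floor_le (mul_nonneg halphaF0 (Nat.cast_nonneg n))
  have hU2 : 2 * numU alphaU n < n := by
    have : (2 * numU alphaU n : ℝ) < n := by
      push_cast
      nlinarith [mul_pos (by linarith : (0:ℝ) < 1/2 - alphaU) hn0]
    exact_mod_cast this
  have hF2 : 2 * numF alphaF n < n := by
    have : (2 * numF alphaF n : ℝ) < n := by
      push_cast
      nlinarith [mul_pos (by linarith : (0:ℝ) < 1/2 - alphaF) hn0]
    exact_mod_cast this
  have hFU : numF alphaF n + numU alphaU n ≤ n - 1 := by omega
  -- the distinguished contingent agent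
  have hiCval : n - 1 < n := by omega
  set iC : Fin n := ⟨n - 1, hiCval⟩ with hiC
  have hiC1 : ¬ (iC : ℕ) < numF alphaF n := by
    simp only [hiC]
    omega
  have hiC2 : ¬ (iC : ℕ) < numF alphaF n + numU alphaU n := by
    simp only [hiC]
    omega
  -- deviation 1 : friendly and contingent agents
  have hD1 : n < 2 * (Finset.univ.filter (fun i : Fin n =>
      ¬(numF alphaF n ≤ (i:ℕ) ∧ (i:ℕ) < numF alphaF n + numU alphaU n))).card := by
    have hsplit := Finset.card_filter_add_card_filter_not
      (s := (Finset.univ : Finset (Fin n)))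
      (p := fun i : Fin n => numF alphaF n ≤ (i:ℕ) ∧ (i:ℕ) < numF alphaF n + numU alphaU n)
    have hle := card_filter_le_of_range (n := n) (numF alphaF n) (numF alphaF n + numU alphaU n)
    rw [Finset.card_univ, Fintype.card_fin] at hsplit
    omega
  obtain ⟨σ1, hoff1, hl1, hh1⟩ := devD_good hphL0 hph hphH1 σ
    (Finset.univ.filter (fun i : Fin n =>
      ¬(numF alphaF n ≤ (i:ℕ) ∧ (i:ℕ) < numF alphaF n + numU alphaU n))) hD1
  have hB1 : (n:ℝ) / ((phH - phL) * (2 * (Finset.univ.filter (fun i : Fin n =>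
      ¬(numF alphaF n ≤ (i:ℕ) ∧ (i:ℕ) < numF alphaF n + numU alphaU n))).card - n))^2 ≤ θ := by
    rw [hθdef]
    apply B_le_theta hn0 hd0 hγm0 hγm1
    have hcard : n - numU alphaU n ≤ (Finset.univ.filter (fun i : Fin n =>
        ¬(numF alphaF n ≤ (i:ℕ) ∧ (i:ℕ) < numF alphaF n + numU alphaU n))).card := by
      have hsplit := Finset.card_filter_add_card_filter_not
        (s := (Finset.univ : Finset (Fin n)))
        (p := fun i : Fin n => numF alphaF n ≤ (i:ℕ) ∧ (i:ℕ) < numF alphaF n + numU alphaU n)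
      have hle := card_filter_le_of_range (n := n) (numF alphaF n) (numF alphaF n + numU alphaU n)
      rw [Finset.card_univ, Fintype.card_fin] at hsplit
      omega
    have hcr : ((n - numU alphaU n : ℕ) : ℝ) ≤ ((Finset.univ.filter (fun i : Fin n =>
        ¬(numF alphaF n ≤ (i:ℕ) ∧ (i:ℕ) < numF alphaF n + numU alphaU n))).card : ℝ) := by
      exact_mod_cast hcard
    have hsub : ((n - numU alphaU n : ℕ) : ℝ) = (n:ℝ) - numU alphaU n := by
      have : numU alphaU n ≤ n := by omega
      push_cast [this]
      ring
    rw [hsub] at hcr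
    have hmin : min (1 - 2*alphaU) (1 - 2*alphaF) ≤ 1 - 2*alphaU := min_le_left _ _
    linarith [mul_le_mul_of_nonneg_right hmin hn0.le, hcr, hUr]
  have hl1θ : prAwins phH phL σ1 false ≤ θ := le_trans hl1 hB1
  have hh1θ : 1 - θ ≤ prAwins phH phL σ1 true := by linarith
  have hl1n := prAwins_nonneg hphL0 hph hphH1 σ1 false
  have hh1n := prAwins_le_one hphL0 hph hphH1 σ1 true
  have hfid1 : 1 - θ ≤ fidelity PH PL phH phL σ1 := by
    show 1 - θ ≤ PL * (1 - prAwins phH phL σ1 false) + PH * prAwins phH phL σ1 true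
    linarith [mul_le_mul_of_nonneg_left hl1θ hPL.le, mul_le_mul_of_nonneg_left hh1θ hPH.le,
      hθsum]
  -- deviation 2 : unfriendly and contingent agents
  have hD2 : n < 2 * (Finset.univ.filter (fun i : Fin n =>
      ¬(0 ≤ (i:ℕ) ∧ (i:ℕ) < numF alphaF n))).card := by
    have hsplit := Finset.card_filter_add_card_filter_not
      (s := (Finset.univ : Finset (Fin n)))
      (p := fun i : Fin n => 0 ≤ (i:ℕ) ∧ (i:ℕ) < numF alphaF n)
    have hle := card_filter_le_of_range (n := n) 0 (numF alphaF n)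
    rw [Finset.card_univ, Fintype.card_fin] at hsplit
    omega
  obtain ⟨σ2, hoff2, hl2, hh2⟩ := devD_good hphL0 hph hphH1 σ
    (Finset.univ.filter (fun i : Fin n => ¬(0 ≤ (i:ℕ) ∧ (i:ℕ) < numF alphaF n))) hD2
  have hB2 : (n:ℝ) / ((phH - phL) * (2 * (Finset.univ.filter (fun i : Fin n =>
      ¬(0 ≤ (i:ℕ) ∧ (i:ℕ) < numF alphaF n))).card - n))^2 ≤ θ := by
    rw [hθdef]
    apply B_le_theta hn0 hd0 hγm0 hγm1
    have hcard : n - numF alphaF n ≤ (Finset.univ.filter (fun i : Fin n =>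
        ¬(0 ≤ (i:ℕ) ∧ (i:ℕ) < numF alphaF n))).card := by
      have hsplit := Finset.card_filter_add_card_filter_not
        (s := (Finset.univ : Finset (Fin n)))
        (p := fun i : Fin n => 0 ≤ (i:ℕ) ∧ (i:ℕ) < numF alphaF n)
      have hle := card_filter_le_of_range (n := n) 0 (numF alphaF n)
      rw [Finset.card_univ, Fintype.card_fin] at hsplit
      omega
    have hcr : ((n - numF alphaF n : ℕ) : ℝ) ≤ ((Finset.univ.filter (fun i : Fin n =>
        ¬(0 ≤ (i:ℕ) ∧ (i:ℕ) < numF alphaF n))).card : ℝ) := by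
      exact_mod_cast hcard
    have hsub : ((n - numF alphaF n : ℕ) : ℝ) = (n:ℝ) - numF alphaF n := by
      have : numF alphaF n ≤ n := by omega
      push_cast [this]
      ring
    rw [hsub] at hcr
    have hmin : min (1 - 2*alphaU) (1 - 2*alphaF) ≤ 1 - 2*alphaF := min_le_right _ _
    linarith [mul_le_mul_of_nonneg_right hmin hn0.le, hcr, hFr]
  have hl2θ : prAwins phH phL σ2 false ≤ θ := le_trans hl2 hB2
  have hh2θ : 1 - θ ≤ prAwins phH phL σ2 true := by linarith
  have hl2n := prAwins_nonneg hphL0 hph hphH1 σ2 false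
  have hh2n := prAwins_le_one hphL0 hph hphH1 σ2 true
  have hfid2 : 1 - θ ≤ fidelity PH PL phH phL σ2 := by
    show 1 - θ ≤ PL * (1 - prAwins phH phL σ2 false) + PH * prAwins phH phL σ2 true
    linarith [mul_le_mul_of_nonneg_left hl2θ hPL.le, mul_le_mul_of_nonneg_left hh2θ hPH.le,
      hθsum]
  -- main case analysis
  by_contra hcon
  push_neg at hcon
  rcases le_or_gt (PH * prAwins phH phL σ true + PL * prAwins phH phL σ false)
      (PH * prAwins phH phL σ1 true + PL * prAwins phH phL σ1 false) with hA | hA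
  · -- deviation 1 is profitable
    refine hBNE ⟨_, σ1, hoff1, ?_, ⟨iC, ?_, ?_⟩⟩
    · intro i hiD
      rw [Finset.mem_filter] at hiD
      by_cases hif : (i:ℕ) < numF alphaF n
      · rw [util_friendly PH PL phH phL alphaF alphaU σ i hif,
          util_friendly PH PL phH phL alphaF alphaU σ1 i hif]
        exact hA
      · have hic : ¬ (i:ℕ) < numF alphaF n + numU alphaU n := by
          rcases hiD with ⟨-, hiD⟩
          omega
        rw [util_contingent PH PL phH phL alphaF alphaU σ i hif hic,
          util_contingent PH PL phH phL alphaF alphaU σ1 i hif hic]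
        linarith
    · rw [Finset.mem_filter]
      refine ⟨Finset.mem_univ iC, ?_⟩
      simp only [hiC]
      omega
    · rw [util_contingent PH PL phH phL alphaF alphaU σ iC hiC1 hiC2,
        util_contingent PH PL phH phL alphaF alphaU σ1 iC hiC1 hiC2]
      linarith
  rcases le_or_gt (PH * prAwins phH phL σ2 true + PL * prAwins phH phL σ2 false)
      (PH * prAwins phH phL σ true + PL * prAwins phH phL σ false) with hB | hB
  · -- deviation 2 is profitable
    refine hBNE ⟨_, σ2, hoff2, ?_, ⟨iC, ?_, ?_⟩⟩
    · intro i hiD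
      rw [Finset.mem_filter] at hiD
      have hif : ¬ (i:ℕ) < numF alphaF n := by
        rcases hiD with ⟨-, hiD⟩
        omega
      by_cases hiu : (i:ℕ) < numF alphaF n + numU alphaU n
      · rw [util_unfriendly PH PL phH phL alphaF alphaU σ i hif hiu,
          util_unfriendly PH PL phH phL alphaF alphaU σ2 i hif hiu]
        linarith
      · rw [util_contingent PH PL phH phL alphaF alphaU σ i hif hiu,
          util_contingent PH PL phH phL alphaF alphaU σ2 i hif hiu]
        linarith
    · rw [Finset.mem_filter]
      refine ⟨Finset.mem_univ iC, ?_⟩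
      simp only [hiC]
      omega
    · rw [util_contingent PH PL phH phL alphaF alphaU σ iC hiC1 hiC2,
        util_contingent PH PL phH phL alphaF alphaU σ2 iC hiC1 hiC2]
      linarith
  · -- the middle band : exact matching deviation
    have hθd : 4 / ((phH - phL)^2 * n) ≤ θ := by
      rw [hθdef]
      rw [div_le_div_iff₀ (by positivity)
        (by nlinarith [pow_pos (mul_pos hd0 hγm0) 2, mul_pos (pow_pos (mul_pos hd0 hγm0) 2) hn0])]
      have hle : ((phH - phL) * min (1 - 2*alphaU) (1 - 2*alphaF))^2 ≤ (phH - phL)^2 := by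
        have hγsq : (min (1 - 2*alphaU) (1 - 2*alphaF))^2 ≤ 1 := by nlinarith
        calc ((phH - phL) * min (1 - 2*alphaU) (1 - 2*alphaF))^2
            = (phH - phL)^2 * (min (1 - 2*alphaU) (1 - 2*alphaF))^2 := by ring
          _ ≤ (phH - phL)^2 * 1 :=
              mul_le_mul_of_nonneg_left hγsq (pow_pos hd0 2).le
          _ = (phH - phL)^2 := mul_one _
      nlinarith [mul_le_mul_of_nonneg_right hle hn0.le]
    have h0c : 0 < PH * prAwins phH phL σ true + PL * prAwins phH phL σ false := by
      linarith [mul_le_mul_of_nonneg_left hh1θ hPH.le, mul_nonneg hPL.le hl1n,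
        mul_pos hPH (by linarith : (0:ℝ) < 1 - θ)]
    have hc1 : PH * prAwins phH phL σ true + PL * prAwins phH phL σ false ≤ 1 := by
      linarith [mul_le_mul_of_nonneg_left hp1 hPH.le, mul_le_mul_of_nonneg_left hq1 hPL.le]
    obtain ⟨σ3, hmatch, hside⟩ := dev3_good hPH hPL hPsum hphL0 hph hphH1 hn1 hn8 h0c hc1
    have hl3n := prAwins_nonneg hphL0 hph hphH1 σ3 false
    have hl3o := prAwins_le_one hphL0 hph hphH1 σ3 false
    have hh3n := prAwins_nonneg hphL0 hph hphH1 σ3 true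
    have hh3o := prAwins_le_one hphL0 hph hphH1 σ3 true
    have hc2θ : PH * prAwins phH phL σ2 true + PL * prAwins phH phL σ2 false ≤ PH + PL * θ := by
      linarith [mul_le_mul_of_nonneg_left hh2n hPH.le, mul_le_mul_of_nonneg_left hl2θ hPL.le]
    have hfid3 : 1 - 2*θ ≤ fidelity PH PL phH phL σ3 := by
      show 1 - 2*θ ≤ PL * (1 - prAwins phH phL σ3 false) + PH * prAwins phH phL σ3 true
      have hPL1 : PL ≤ 1 := by linarith
      have hPH1 : PH ≤ 1 := by linarith
      rcases hside with hs | hs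
      · -- small false-positive probability
        have hl3θ : prAwins phH phL σ3 false ≤ θ := le_trans hs hθd
        have hkey : PH * (1 - θ) - PL * θ ≤ PH * prAwins phH phL σ3 true := by
          linarith [mul_le_mul_of_nonneg_left hl3θ hPL.le,
            mul_le_mul_of_nonneg_left hh1θ hPH.le, mul_nonneg hPL.le hl1n]
        linarith [mul_le_mul_of_nonneg_left hl3θ hPL.le, hθsum,
          mul_le_mul_of_nonneg_right hPL1 hθ0.le]
      · -- large true-positive probability
        have hh3θ : 1 - θ ≤ prAwins phH phL σ3 true := by
          have := hθd
          linarith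
        have hkey : PL * prAwins phH phL σ3 false ≤ θ := by
          linarith [mul_le_mul_of_nonneg_left hh3θ hPH.le, hθsum]
        linarith [mul_le_mul_of_nonneg_left hh3θ hPH.le, hθsum,
          mul_le_mul_of_nonneg_right hPH1 hθ0.le]
    refine hBNE ⟨Finset.univ, σ3, ?_, ?_, ⟨iC, Finset.mem_univ iC, ?_⟩⟩
    · intro i hi
      exact absurd (Finset.mem_univ i) hi
    · intro i _
      by_cases hif : (i:ℕ) < numF alphaF n
      · rw [util_friendly PH PL phH phL alphaF alphaU σ i hif,
          util_friendly PH PL phH phL alphaF alphaU σ3 i hif]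
        linarith
      · by_cases hiu : (i:ℕ) < numF alphaF n + numU alphaU n
        · rw [util_unfriendly PH PL phH phL alphaF alphaU σ i hif hiu,
            util_unfriendly PH PL phH phL alphaF alphaU σ3 i hif hiu]
          linarith
        · rw [util_contingent PH PL phH phL alphaF alphaU σ i hif hiu,
            util_contingent PH PL phH phL alphaF alphaU σ3 i hif hiu]
          linarith
    · rw [util_contingent PH PL phH phL alphaF alphaU σ iC hiC1 hiC2,
        util_contingent PH PL phH phL alphaF alphaU σ3 iC hiC1 hiC2]
      linarith

end MainBound

/-- **Theorem 1 (All ε-BNE are good).** In a fixed voting environment with 0-1 utilities,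
if `Σ n` is an `ε n`-strong Bayes Nash equilibrium of the `n`-agent two-round voting game
for every `n`, where `ε n ≥ 0` and `ε n → 0`, then the fidelity of `Σ n` converges to `1`. -/
theorem all_eps_BNE_are_good
    (PH PL phH phL alphaF alphaU : ℝ)
    (hPH : 0 < PH) (hPL : 0 < PL) (hPsum : PH + PL = 1)
    (hphL0 : 0 < phL) (hph : phL < phH) (hphH1 : phH < 1)
    (halphaF0 : 0 ≤ alphaF) (halphaF : alphaF < 1 / 2)
    (halphaU0 : 0 ≤ alphaU) (halphaU : alphaU < 1 / 2)
    (halphaC : alphaF + alphaU < 1)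
    (S : ∀ n : ℕ, TwoRound n) (ε : ℕ → ℝ)
    (hε0 : ∀ n, 0 ≤ ε n) (hεlim : Tendsto ε atTop (nhds 0))
    (hBNE : ∀ n, IsEpsStrongBNE PH PL phH phL alphaF alphaU (S n) (ε n)) :
    Tendsto (fun n => fidelity PH PL phH phL (S n)) atTop (nhds 1) := by
  classical
  have hd0 : 0 < phH - phL := by linarith
  have hγU : (0:ℝ) < 1 - 2*alphaU := by linarith
  have hγF : (0:ℝ) < 1 - 2*alphaF := by linarith
  have hγm0 : 0 < min (1 - 2*alphaU) (1 - 2*alphaF) := lt_min hγU hγF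
  have hX0 : 0 < ((phH - phL) * min (1 - 2*alphaU) (1 - 2*alphaF))^2 :=
    pow_pos (mul_pos hd0 hγm0) 2
  set g : ℕ → ℝ :=
    fun n => 4 / (((phH - phL) * min (1 - 2*alphaU) (1 - 2*alphaF))^2 * n) with hg
  have hgC : ∀ n : ℕ, g n
      = (4 / ((phH - phL) * min (1 - 2*alphaU) (1 - 2*alphaF))^2) * (1/(n:ℝ)) := by
    intro n
    rw [hg]
    dsimp only
    rw [div_mul_eq_div_div, mul_one_div]
  have hg0 : Tendsto g atTop (nhds 0) := by
    have hone : Tendsto (fun n : ℕ => 1/(n:ℝ)) atTop (nhds 0) :=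
      tendsto_one_div_atTop_nhds_zero_nat
    have := hone.const_mul (4 / ((phH - phL) * min (1 - 2*alphaU) (1 - 2*alphaF))^2)
    rw [mul_zero] at this
    refine Tendsto.congr (fun n => (hgC n).symm) this
  have hL : Tendsto (fun n => 1 - 2 * g n - ε n) atTop (nhds 1) := by
    have h1 : Tendsto (fun n : ℕ => (1:ℝ)) atTop (nhds 1) := tendsto_const_nhds
    have := (h1.sub (hg0.const_mul 2)).sub hεlim
    simpa using this
  have hupper : ∀ n : ℕ, fidelity PH PL phH phL (S n) ≤ 1 := by
    intro n
    have hp1 := prAwins_le_one hphL0 hph hphH1 (S n) true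
    have hq0 := prAwins_nonneg hphL0 hph hphH1 (S n) false
    show PL * (1 - prAwins phH phL (S n) false) + PH * prAwins phH phL (S n) true ≤ 1
    have h1 : PL * (1 - prAwins phH phL (S n) false) ≤ PL * 1 :=
      mul_le_mul_of_nonneg_left (by linarith) hPL.le
    have h2 : PH * prAwins phH phL (S n) true ≤ PH * 1 :=
      mul_le_mul_of_nonneg_left hp1 hPH.le
    linarith
  have hlower : ∀ᶠ n : ℕ in atTop, 1 - 2 * g n - ε n ≤ fidelity PH PL phH phL (S n) := by
    have hev1 : ∀ᶠ n : ℕ in atTop, 1 ≤ n := Filter.eventually_ge_atTop 1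
    have hev8 : ∀ᶠ n : ℕ in atTop, 8 ≤ (phH - phL) * n := by
      filter_upwards [Filter.eventually_ge_atTop ⌈(8:ℝ)/(phH - phL)⌉₊] with n hn
      have h1 : (8:ℝ)/(phH - phL) ≤ (n:ℝ) := by
        calc (8:ℝ)/(phH - phL) ≤ (⌈(8:ℝ)/(phH - phL)⌉₊ : ℝ) := Nat.le_ceil _
          _ ≤ (n:ℝ) := by exact_mod_cast hn
      calc (8:ℝ) = (8/(phH - phL)) * (phH - phL) := by field_simp
        _ ≤ (n:ℝ) * (phH - phL) := mul_le_mul_of_nonneg_right h1 hd0.le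
        _ = (phH - phL) * n := mul_comm _ _
    have hevθ : ∀ᶠ n : ℕ in atTop, g n < 1 := by
      have : ∀ᶠ x in nhds (0:ℝ), x < 1 := eventually_lt_nhds (by norm_num)
      exact hg0.eventually this
    filter_upwards [hev1, hev8, hevθ] with n hn1 hn8 hnθ
    exact fidelity_lower PH PL phH phL alphaF alphaU hPH hPL hPsum hphL0 hph hphH1
      halphaF0 halphaF halphaU0 halphaU hn1 hn8 hnθ (S n) (ε n) (hε0 n) (hBNE n)
  exact tendsto_of_tendsto_of_tendsto_of_le_of_le' hL tendsto_const_nhds hlower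
    (Filter.Eventually.of_forall hupper)


end TwoRoundVoting
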